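/- arXiv:1708.02708 — 2 statements merged into one kernel-verified Lean document; each statement's English description precedes it below -/
import Mathlib

section
/- Dual Ky Fan inequality: if f is supermodular on a distributive lattice, then for any x₁,…,x_q and 1 ≤ p ≤ q, Σ_{1≤i₁<⋯<i_p≤q} f(x_{i₁} ∨ ⋯ ∨ x_{i_p}) ≤ Σ_{k=p}^q C(k−1, p−1) f(⋀_{1≤i₁<⋯<i_k≤q} (x_{i₁} ∨ ⋯ ∨ x_{i_k})). -/
/-!
View the joins `⋁_{i ∈ s} x i`, `#s = p`, as one family `a`. For a finite family in a bounded
distributive lattice, supermodularity gives `∑ f (a i) ≤ ∑_k f (d k)`, where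
`d k = ⋀_{#T = k} ⋁_{i ∈ T} a i` are its order statistics: adding an element `c` to the family
turns the chain `d` into `k ↦ d k ⊓ (d (k - 1) ⊔ c)`, and inserting `c` into a chain by
successive exchanges `(u, v) ↦ (u ⊔ v, u ⊓ v)` can only increase the sum of `f`.
For the family of `p`-fold joins, `d n = ⋀_{#t = k} ⋁_{i ∈ t} x i` exactly when
`C(k-1, p) < n ≤ C(k, p)`, a block of `C(k-1, p-1)` indices. Boundedness is harmless: all elements
involved lie in the interval `[⋀ x, ⋁ x]`.
-/

open Finset

section OrderStatistic

variable {ι α : Type*} [DistribLattice α] [BoundedOrder α]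

/-- For a chain `a` this is the `k`-th smallest of the `a i`, `i ∈ A`;
it is `⊥` at `k = 0` and `⊤` for `k > #A`. -/
def orderStatistic (A : Finset ι) (a : ι → α) (k : ℕ) : α :=
  (A.powersetCard k).inf fun T => T.sup a

variable (A : Finset ι) (a : ι → α)

@[simp]
lemma orderStatistic_zero : orderStatistic A a 0 = ⊥ := by
  simp [orderStatistic]

lemma orderStatistic_of_card_lt {k : ℕ} (h : #A < k) : orderStatistic A a k = ⊤ := by
  simp [orderStatistic, powersetCard_eq_empty.2 h]

lemma orderStatistic_mono : Monotone (orderStatistic A a) := by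
  refine monotone_nat_of_le_succ fun k => Finset.le_inf fun T hT => ?_
  obtain ⟨hTA, hTk⟩ := mem_powersetCard.1 hT
  obtain ⟨S, hST, hSk⟩ := exists_subset_card_eq (show k ≤ #T by omega)
  exact (inf_le (mem_powersetCard.2 ⟨hST.trans hTA, hSk⟩)).trans (sup_mono hST)

lemma orderStatistic_insert [DecidableEq ι] {i : ι} (hi : i ∉ A) (k : ℕ) :
    orderStatistic (insert i A) a (k + 1) =
      orderStatistic A a (k + 1) ⊓ (orderStatistic A a k ⊔ a i) := by
  simp only [orderStatistic, powersetCard_succ_insert hi, inf_union, inf_image,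
    inf_sup_distrib_right]
  congr 1
  refine inf_congr rfl fun T _ => ?_
  simp [sup_insert, sup_comm]

lemma orderStatistic_powersetCard [DecidableEq ι] (V : Finset ι) (x : ι → α) {p k n : ℕ}
    (hlow : (k - 1).choose p < n) (hhigh : n ≤ k.choose p) :
    orderStatistic (V.powersetCard p) (fun s => s.sup x) n = orderStatistic V x k := by
  apply le_antisymm
  · refine Finset.le_inf fun t ht => ?_
    obtain ⟨htV, htk⟩ := mem_powersetCard.1 ht
    obtain ⟨T, hTt, hTn⟩ :=
      exists_subset_card_eq (show n ≤ #(t.powersetCard p) by rwa [card_powersetCard, htk])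
    refine (inf_le (mem_powersetCard.2 ⟨hTt.trans (powersetCard_mono htV), hTn⟩)).trans ?_
    exact Finset.sup_le fun s hs => sup_mono (mem_powersetCard.1 (hTt hs)).1
  · refine Finset.le_inf fun T hT => ?_
    obtain ⟨hTV, hTn⟩ := mem_powersetCard.1 hT
    set U := T.biUnion id
    have hTU : T ⊆ U.powersetCard p := fun s hs =>
      mem_powersetCard.2 ⟨subset_biUnion_of_mem id hs, (mem_powersetCard.1 (hTV hs)).2⟩
    have hUV : U ⊆ V := biUnion_subset.2 fun s hs => (mem_powersetCard.1 (hTV hs)).1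
    have hkU : k ≤ #U := by
      by_contra! hUk
      have := (card_le_card hTU).trans_eq (card_powersetCard p U)
      have := Nat.choose_le_choose p (show #U ≤ k - 1 by omega)
      omega
    obtain ⟨t, htU, htk⟩ := exists_subset_card_eq hkU
    refine (inf_le (mem_powersetCard.2 ⟨htU.trans hUV, htk⟩)).trans ?_
    rw [← sup_biUnion]
    exact sup_mono htU

end OrderStatistic

lemma sum_range_choose_eq_sum_Icc {M : Type*} [AddCommMonoid M] {p : ℕ} (hp : 1 ≤ p)
    (F G : ℕ → M) (hFG : ∀ k n, (k - 1).choose p ≤ n → n < k.choose p → F n = G k)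
    {Q : ℕ} (hQ : p ≤ Q) :
    ∑ n ∈ range (Q.choose p), F n = ∑ k ∈ Icc p Q, (k - 1).choose (p - 1) • G k := by
  obtain ⟨p, rfl⟩ : ∃ p', p = p' + 1 := ⟨p - 1, by omega⟩
  induction Q, hQ using Nat.le_induction with
  | base =>
    have hF : F 0 = G (p + 1) := hFG _ _ (by simp) (by simp)
    simp [hF]
  | succ Q hQ ih =>
    have hblock : ∀ n ∈ Ico (Q.choose (p + 1)) ((Q + 1).choose (p + 1)), F n = G (Q + 1) :=
      fun n hn => hFG _ _ (mem_Ico.1 hn).1 (mem_Ico.1 hn).2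
    rw [← sum_range_add_sum_Ico F (Nat.choose_le_choose _ Q.le_succ), ih, sum_congr rfl hblock,
      sum_const, Nat.card_Ico, sum_Icc_succ_top (by omega), Nat.choose_succ_succ']
    simp

def Supermodular {α β : Type*} [Lattice α] [Add β] [LE β] (f : α → β) : Prop :=
  ∀ a b, f a + f b ≤ f (a ⊔ b) + f (a ⊓ b)

namespace Supermodular

variable {α β : Type*} [AddCommMonoid β] [PartialOrder β] [IsOrderedAddMonoid β] {f : α → β}

lemma apply_sup_add_sum_chain_le [Lattice α] (hf : Supermodular f) {d : ℕ → α} (hd : Monotone d)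
    (c : α) (m : ℕ) :
    f (d 0 ⊔ c) + ∑ k ∈ range m, f (d (k + 1)) ≤
      ∑ k ∈ range m, f (d (k + 1) ⊓ (d k ⊔ c)) + f (d m ⊔ c) := by
  induction m with
  | zero => simp
  | succ m ih =>
    have hsup : d (m + 1) ⊔ (d m ⊔ c) = d (m + 1) ⊔ c := by
      rw [← sup_assoc, sup_eq_left.2 (hd m.le_succ)]
    calc f (d 0 ⊔ c) + ∑ k ∈ range (m + 1), f (d (k + 1))
        = (f (d 0 ⊔ c) + ∑ k ∈ range m, f (d (k + 1))) + f (d (m + 1)) := by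
          rw [sum_range_succ, add_assoc]
      _ ≤ (∑ k ∈ range m, f (d (k + 1) ⊓ (d k ⊔ c)) + f (d m ⊔ c)) + f (d (m + 1)) := by
          gcongr
      _ ≤ ∑ k ∈ range m, f (d (k + 1) ⊓ (d k ⊔ c)) +
            (f (d (m + 1) ⊔ (d m ⊔ c)) + f (d (m + 1) ⊓ (d m ⊔ c))) := by
          rw [add_assoc, add_comm (f (d m ⊔ c))]
          exact add_le_add le_rfl (hf _ _)
      _ = ∑ k ∈ range (m + 1), f (d (k + 1) ⊓ (d k ⊔ c)) + f (d (m + 1) ⊔ c) := by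
          rw [hsup, sum_range_succ, add_assoc, add_comm (f (d (m + 1) ⊔ c))]

lemma sum_le_sum_orderStatistic [DistribLattice α] [BoundedOrder α] (hf : Supermodular f)
    {ι : Type*} (A : Finset ι) (a : ι → α) :
    ∑ i ∈ A, f (a i) ≤ ∑ k ∈ range #A, f (orderStatistic A a (k + 1)) := by
  classical
  induction A using Finset.induction_on with
  | empty => simp
  | insert i A hi ih =>
    set d := orderStatistic A a
    calc ∑ j ∈ insert i A, f (a j)
        ≤ f (d 0 ⊔ a i) + ∑ k ∈ range #A, f (d (k + 1)) := by
          rw [sum_insert hi, show d 0 = ⊥ from orderStatistic_zero A a, bot_sup_eq]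
          gcongr
      _ ≤ ∑ k ∈ range #A, f (d (k + 1) ⊓ (d k ⊔ a i)) + f (d #A ⊔ a i) :=
          hf.apply_sup_add_sum_chain_le (orderStatistic_mono A a) _ _
      _ = ∑ k ∈ range #(insert i A), f (orderStatistic (insert i A) a (k + 1)) := by
          simp only [card_insert_of_notMem hi, sum_range_succ, orderStatistic_insert A a hi, d,
            orderStatistic_of_card_lt A a (Nat.lt_succ_self _), top_inf_eq]

theorem sum_sup_powersetCard_le [DistribLattice α] [BoundedOrder α] (hf : Supermodular f)
    {ι : Type*} [DecidableEq ι] (V : Finset ι) (x : ι → α) {p : ℕ} (hp : 1 ≤ p)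
    (hpV : p ≤ #V) :
    ∑ s ∈ V.powersetCard p, f (s.sup x) ≤
      ∑ k ∈ Icc p #V, (k - 1).choose (p - 1) • f (orderStatistic V x k) := by
  calc ∑ s ∈ V.powersetCard p, f (s.sup x)
      ≤ ∑ n ∈ range #(V.powersetCard p),
          f (orderStatistic (V.powersetCard p) (fun s => s.sup x) (n + 1)) :=
        hf.sum_le_sum_orderStatistic _ _
    _ = ∑ k ∈ Icc p #V, (k - 1).choose (p - 1) • f (orderStatistic V x k) := by
        rw [card_powersetCard]
        refine sum_range_choose_eq_sum_Icc hp _ _ (fun k n hlow hhigh => ?_) hpV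
        rw [orderStatistic_powersetCard V x (k := k) (by omega) (by omega)]

end Supermodular

namespace Set.Icc

variable {ι α : Type*} [DistribLattice α] {a b : α}

instance distribLattice : DistribLattice (Icc a b) :=
  { Icc.lattice with le_sup_inf := fun _ _ _ => le_sup_inf }

variable [Fact (a ≤ b)] {s : Finset ι}

lemma coe_finset_sup (hs : s.Nonempty) (y : ι → Icc a b) :
    ((s.sup y : Icc a b) : α) = s.sup' hs fun i => (y i : α) := by
  rw [← sup'_eq_sup hs]
  exact apply_sup'_eq_sup'_comp hs _ fun _ _ => rfl

lemma coe_finset_inf (hs : s.Nonempty) (y : ι → Icc a b) :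
    ((s.inf y : Icc a b) : α) = s.inf' hs fun i => (y i : α) := by
  rw [← inf'_eq_inf hs]
  exact apply_inf'_eq_inf'_comp hs _ fun _ _ => rfl

end Set.Icc

/-- Dual Ky Fan inequality: for a supermodular `f` on a distributive lattice,
elements `x 1, …, x q`, and `1 ≤ p ≤ q`,
`∑_{|s| = p} f(⋁_{i ∈ s} x i) ≤ ∑_{k=p}^q C(k−1, p−1) f(⋀_{|t| = k} ⋁_{i ∈ t} x i)`. -/
theorem fan_inequality_dual {𝕃 : Type*} [DistribLattice 𝕃] (f : 𝕃 → ℝ)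
    (hf : ∀ a b : 𝕃, f a + f b ≤ f (a ⊔ b) + f (a ⊓ b))
    (q p : ℕ) (hp : 1 ≤ p) (hpq : p ≤ q) (x : Fin q → 𝕃) :
    ∑ s ∈ (Finset.univ.powersetCard p).attach,
      f (s.1.sup'
          (Finset.card_pos.mp
            (by
              have hs := (Finset.mem_powersetCard.mp s.2).2
              omega))
          x) ≤
      ∑ k ∈ (Finset.Icc p q).attach,
        (((k : ℕ) - 1).choose (p - 1) : ℝ) *
          f (((Finset.univ.powersetCard (k : ℕ)).attach).inf'
              (Finset.attach_nonempty_iff.mpr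
                (Finset.powersetCard_nonempty.mpr
                  (by simpa using (Finset.mem_Icc.mp k.2).2)))
              (fun t => t.1.sup'
                (Finset.card_pos.mp
                  (by
                    have ht := (Finset.mem_powersetCard.mp t.2).2
                    have hk := (Finset.mem_Icc.mp k.2).1
                    omega))
                x)) := by
  have huniv : (univ : Finset (Fin q)).Nonempty := univ_nonempty_iff.2 ⟨⟨0, by omega⟩⟩
  set lo := univ.inf' huniv x
  set hi := univ.sup' huniv x
  have : Fact (lo ≤ hi) := ⟨(inf'_le x (mem_univ ⟨0, by omega⟩)).trans (le_sup' x (mem_univ _))⟩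
  let y (i : Fin q) : Set.Icc lo hi := ⟨x i, inf'_le x (mem_univ i), le_sup' x (mem_univ i)⟩
  have hsup (s : Finset (Fin q)) (hs : s.Nonempty) :
      ((s.sup y : Set.Icc lo hi) : 𝕃) = s.sup' hs x :=
    Set.Icc.coe_finset_sup hs y
  have hstat (k : ℕ) (hk : (univ.powersetCard k).attach.Nonempty)
      (hs : ∀ t : univ.powersetCard k, t.1.Nonempty) :
      ((orderStatistic univ y k : Set.Icc lo hi) : 𝕃) =
        (univ.powersetCard k).attach.inf' hk fun t => t.1.sup' (hs t) x := by
    rw [orderStatistic, ← inf_attach, Set.Icc.coe_finset_inf hk]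
    exact inf'_congr hk rfl fun t _ => hsup _ _
  have key := Supermodular.sum_sup_powersetCard_le (f := fun a : Set.Icc lo hi => f a)
    (fun a b => hf a b) univ y hp (by simpa using hpq)
  rw [card_univ, Fintype.card_fin] at key
  calc _ = ∑ s ∈ (univ.powersetCard p).attach, f (s.1.sup y : Set.Icc lo hi) :=
        sum_congr rfl fun s _ => by rw [hsup]
    _ = ∑ s ∈ univ.powersetCard p, f (s.sup y : Set.Icc lo hi) :=
        sum_attach _ fun s : Finset (Fin q) => f (s.sup y : Set.Icc lo hi)
    _ ≤ ∑ k ∈ Icc p q, (k - 1).choose (p - 1) • f (orderStatistic univ y k : Set.Icc lo hi) := key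
    _ = _ := by
        rw [← sum_attach (Icc p q)]
        exact sum_congr rfl fun k _ => by rw [nsmul_eq_mul, hstat]
end

section
/- Generalized Dobra–Fienberg bound (Theorem on arbitrary covers): let C₁,…,C_d ⊆ L with C₁ ∪ ⋯ ∪ C_d = L, and set S_j = (C₁ ∪ ⋯ ∪ C_{j−1}) ∩ C_j for j = 2,…,d. Then each full cell entry n(x) satisfies n(x) ≥ Σ_{i=1}^d n(C_i)(x restricted to C_i) − Σ_{j=2}^d n(S_j)(x restricted to S_j). -/
/-- The marginal of a contingency table `n` over the subset `a` of coordinates. -/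
noncomputable def marg {ι : Type*} [Fintype ι] [DecidableEq ι] {I : ι → Type*}
    [∀ i, Fintype (I i)] [∀ i, DecidableEq (I i)]
    (n : (∀ i, I i) → ℝ) (a : Finset ι) (x : ∀ i, I i) : ℝ :=
  ∑ y ∈ Finset.univ.filter (fun y : ∀ i, I i => ∀ i ∈ a, y i = x i), n y

lemma marg_supermodular {ι : Type*} [Fintype ι] [DecidableEq ι] {I : ι → Type*}
    [∀ i, Fintype (I i)] [∀ i, DecidableEq (I i)]
    (n : (∀ i, I i) → ℝ) (hn : ∀ y, 0 ≤ n y) (a b : Finset ι) (x : ∀ i, I i) :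
    marg n a x + marg n b x ≤ marg n (a ∪ b) x + marg n (a ∩ b) x := by
  classical
  set A := Finset.univ.filter (fun y : ∀ i, I i => ∀ i ∈ a, y i = x i) with hA
  set B := Finset.univ.filter (fun y : ∀ i, I i => ∀ i ∈ b, y i = x i) with hB
  have h1 : marg n (a ∪ b) x = ∑ y ∈ A ∩ B, n y := by
    unfold marg
    congr 1
    ext y
    simp [hA, hB, Finset.mem_union, or_imp, forall_and]
  have h2 : ∑ y ∈ A ∪ B, n y ≤ marg n (a ∩ b) x := by
    apply Finset.sum_le_sum_of_subset_of_nonneg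
    · intro y hy
      simp only [hA, hB, Finset.mem_union, Finset.mem_filter, Finset.mem_univ, true_and] at hy ⊢
      intro i hi
      simp only [Finset.mem_inter] at hi
      rcases hy with h | h
      · exact h i hi.1
      · exact h i hi.2
    · intro y _ _; exact hn y
  have key : ∑ y ∈ A ∪ B, n y + ∑ y ∈ A ∩ B, n y = ∑ y ∈ A, n y + ∑ y ∈ B, n y :=
    Finset.sum_union_inter
  have : marg n a x + marg n b x = ∑ y ∈ A ∪ B, n y + ∑ y ∈ A ∩ B, n y := key.symm
  rw [this, h1]
  linarith

/-- Generalized Dobra–Fienberg bound for arbitrary covers `C 0, …, C (d-1)` of the index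
set (no graph-theoretic assumptions): with `S j = (C 0 ∪ ⋯ ∪ C (j-1)) ∩ C j`,
`n(x) ≥ Σ_i n(C i)(x) − Σ_{j=1}^{d-1} n(S j)(x)`. -/
theorem dobra_fienberg_bound {ι : Type*} [Fintype ι] [DecidableEq ι] {I : ι → Type*}
    [∀ i, Fintype (I i)] [∀ i, DecidableEq (I i)]
    (n : (∀ i, I i) → ℝ) (hn : ∀ y, 0 ≤ n y)
    (d : ℕ) (hd : 1 ≤ d) (C : ℕ → Finset ι)
    (hcover : (Finset.range d).sup C = Finset.univ) (x : ∀ i, I i) :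
    (∑ i ∈ Finset.range d, marg n (C i) x)
      - ∑ j ∈ Finset.Ico 1 d, marg n (((Finset.range j).sup C) ∩ C j) x
      ≤ n x := by
  classical
  have main : ∀ m : ℕ, 1 ≤ m →
      (∑ i ∈ Finset.range m, marg n (C i) x)
        - ∑ j ∈ Finset.Ico 1 m, marg n (((Finset.range j).sup C) ∩ C j) x
        ≤ marg n ((Finset.range m).sup C) x := by
    intro m hm
    induction m with
    | zero => omega
    | succ k ih =>
      rcases Nat.eq_or_lt_of_le hm with h | h
      · -- k = 0
        have hk : k = 0 := by omega
        subst hk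
        simp [marg]
      · have hk : 1 ≤ k := by omega
        have ih' := ih hk
        rw [Finset.sum_range_succ, Finset.sum_Ico_succ_top hk,
          Finset.range_add_one, Finset.sup_insert, sup_comm]
        have hsup := marg_supermodular n hn ((Finset.range k).sup C) (C k) x
        have : marg n ((Finset.range k).sup C) x + marg n (C k) x
            - marg n (((Finset.range k).sup C) ∩ C k) x
            ≤ marg n ((Finset.range k).sup C ⊔ C k) x := by
          simp only [Finset.sup_eq_union] at *
          linarith
        simp only [Finset.sup_eq_union] at this ⊢
        linarith
  have h := main d hd
  rw [hcover] at h
  have : marg n Finset.univ x = n x := by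
    unfold marg
    have : Finset.univ.filter (fun y : ∀ i, I i => ∀ i ∈ (Finset.univ : Finset ι), y i = x i)
        = {x} := by
      ext y
      simp [funext_iff]
    rw [this, Finset.sum_singleton]
  linarith
end
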